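/- Let r > 0 and define Υ(α) = ∫_{x ∈ ℝ_{≥0}^m, ∑ x_i ≤ α} E_r(x) dx for α ∈ (0,1], where E_r(x) = 2(∑ x_i) log r − [∑ x_i log x_i + (1 − ∑ x_i) log(1 − ∑ x_i)]. Then Υ is differentiable on (0,1) with Υ'(α) = (α^{m−1}/(m−1)!)·{(2 log r + ∑_{k=2}^m 1/k)·α − [α·log α + (1−α)·log(1−α)]}, where ∑_{k=2}^m 1/k = 0 when m = 1. -/

import Mathlib

/-!
Write `S n a = {x ∈ ℝⁿ | x ≥ 0, ∑ xᵢ ≤ a}`, so that `vol (S n a) = aⁿ / n!`. Slicing off one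
coordinate shows that, under Lebesgue measure on `S (n + 1) a`, each coordinate `xᵢ` has density
`(a - t)ⁿ / n!` on `[0, a]`; comparing distribution functions shows that `∑ xᵢ` has density
`tⁿ / n!`. Hence, for `a ≥ 0`,
`Υ(a) = ∫₀ᵃ (2t log r - (1 - t) log (1 - t)) tⁿ / n! dt - (n + 1) ∫₀ᵃ t log t (a - t)ⁿ / n! dt`.
Integrating by parts `n` times, the last integral is the `(n + 1)`-fold primitive of `t log t`
vanishing at `0`, namely `a^(n+2) / (n+2)! · (log a - (H_{n+2} - 1))`; the harmonic numbers come
from `t^(k+1) / (k+1)! · (log t - c - 1 / (k+1))` being a primitive of `t^k / k! · (log t - c)`.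
Differentiating in `a` gives the formula.
-/

open MeasureTheory Set
open scoped ENNReal Nat

def solidSimplex (m : ℕ) (a : ℝ) : Set (Fin m → ℝ) := {x | (∀ i, 0 ≤ x i) ∧ ∑ i, x i ≤ a}

lemma isClosed_solidSimplex (m : ℕ) (a : ℝ) : IsClosed (solidSimplex m a) := by
  simp only [solidSimplex, ofPred_and, ofPred_forall]
  exact (isClosed_iInter fun i => isClosed_le continuous_const (continuous_apply i)).inter
    (isClosed_le (by fun_prop) continuous_const)

lemma isCompact_solidSimplex (m : ℕ) (a : ℝ) : IsCompact (solidSimplex m a) :=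
  (isCompact_Icc (a := 0) (b := fun _ => a)).of_isClosed_subset (isClosed_solidSimplex m a)
    fun _ hx => ⟨hx.1, fun i =>
      (Finset.single_le_sum (fun j _ => hx.1 j) (Finset.mem_univ i)).trans hx.2⟩

lemma solidSimplex_succ (n : ℕ) (i : Fin (n + 1)) (a : ℝ) :
    solidSimplex (n + 1) a = MeasurableEquiv.piFinSuccAbove (fun _ => ℝ) i ⁻¹'
      {p | 0 ≤ p.1 ∧ p.2 ∈ solidSimplex n (a - p.1)} := by
  ext x
  simp only [solidSimplex, mem_ofPred_eq, mem_preimage, MeasurableEquiv.piFinSuccAbove_apply,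
    Fin.insertNthEquiv_symm_apply, Fin.removeNth_apply, Fin.forall_iff_succAbove i,
    Fin.sum_univ_succAbove x i, le_sub_iff_add_le', and_assoc]

lemma measurableSet_solidSimplex_slices (n : ℕ) (a : ℝ) :
    MeasurableSet {p : ℝ × (Fin n → ℝ) | 0 ≤ p.1 ∧ p.2 ∈ solidSimplex n (a - p.1)} := by
  unfold solidSimplex; measurability

lemma map_eval_volume_restrict_solidSimplex_eq_withDensity_slice (n : ℕ) (i : Fin (n + 1)) (a : ℝ) :
    (volume.restrict (solidSimplex (n + 1) a)).map (fun x => x i) =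
      volume.withDensity ((Ici 0).indicator fun t => volume (solidSimplex n (a - t))) := by
  ext B hB
  have hT := measurableSet_solidSimplex_slices n a
  have hpre : (fun x => x i) ⁻¹' B ∩ solidSimplex (n + 1) a =
      MeasurableEquiv.piFinSuccAbove (fun _ => ℝ) i ⁻¹'
        (Prod.fst ⁻¹' B ∩ {p | 0 ≤ p.1 ∧ p.2 ∈ solidSimplex n (a - p.1)}) := by
    rw [solidSimplex_succ n i a]; rfl
  rw [Measure.map_apply (measurable_pi_apply i) hB,
    Measure.restrict_apply (measurable_pi_apply i hB), hpre,
    (volume_preserving_piFinSuccAbove (fun _ => ℝ) i).measure_preimage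
      ((measurable_fst hB).inter hT).nullMeasurableSet,
    Measure.volume_eq_prod, Measure.prod_apply ((measurable_fst hB).inter hT),
    withDensity_apply _ hB, ← lintegral_indicator hB]
  refine lintegral_congr fun t => ?_
  by_cases htB : t ∈ B <;> by_cases ht : 0 ≤ t <;> simp [htB, ht, preimage_preimage]

lemma integral_pow_div_factorial (n : ℕ) (a : ℝ) :
    ∫ t in 0..a, t ^ n / n ! = a ^ (n + 1) / (n + 1)! := by
  rw [intervalIntegral.integral_div, integral_pow, Nat.factorial_succ]
  push_cast
  field_simp
  ring

lemma integral_sub_pow_div_factorial (n : ℕ) (a : ℝ) :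
    ∫ t in 0..a, (a - t) ^ n / n ! = a ^ (n + 1) / (n + 1)! := by
  refine (intervalIntegral.integral_comp_sub_left (fun t => t ^ n / n !) a).trans ?_
  rw [sub_self, sub_zero, integral_pow_div_factorial]

lemma lintegral_Icc_ofReal_eq_ofReal_intervalIntegral {ρ : ℝ → ℝ} (hρ : Continuous ρ) {a : ℝ}
    (ha : 0 ≤ a) (hρ₀ : ∀ t ∈ Icc 0 a, 0 ≤ ρ t) :
    ∫⁻ t in Icc 0 a, ENNReal.ofReal (ρ t) = ENNReal.ofReal (∫ t in 0..a, ρ t) := by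
  rw [intervalIntegral.integral_of_le ha, ← integral_Icc_eq_integral_Ioc,
    ofReal_integral_eq_lintegral_ofReal hρ.integrableOn_Icc
      (ae_restrict_of_forall_mem measurableSet_Icc hρ₀)]

lemma lintegral_Icc_pow_div_factorial (n : ℕ) (a : ℝ) :
    ∫⁻ t in Icc 0 a, ENNReal.ofReal (t ^ n / n !) =
      if 0 ≤ a then ENNReal.ofReal (a ^ (n + 1) / (n + 1)!) else 0 := by
  split_ifs with ha
  · rw [lintegral_Icc_ofReal_eq_ofReal_intervalIntegral (by fun_prop) ha
      fun t ht => by have := ht.1; positivity, integral_pow_div_factorial]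
  · simp [Icc_eq_empty ha]

lemma lintegral_Icc_sub_pow_div_factorial (n : ℕ) (a : ℝ) :
    ∫⁻ t in Icc 0 a, ENNReal.ofReal ((a - t) ^ n / n !) =
      if 0 ≤ a then ENNReal.ofReal (a ^ (n + 1) / (n + 1)!) else 0 := by
  split_ifs with ha
  · rw [lintegral_Icc_ofReal_eq_ofReal_intervalIntegral (by fun_prop) ha
      fun t ht => by have := sub_nonneg.2 ht.2; positivity, integral_sub_pow_div_factorial]
  · simp [Icc_eq_empty ha]

theorem volume_solidSimplex (m : ℕ) (a : ℝ) :
    volume (solidSimplex m a) = if 0 ≤ a then ENNReal.ofReal (a ^ m / m !) else 0 := by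
  induction m generalizing a with
  | zero =>
    split_ifs with ha <;> simp [solidSimplex, ha, volume_pi]
  | succ n ih =>
    have hdens : (Ici 0).indicator (fun t => volume (solidSimplex n (a - t))) =
        (Icc 0 a).indicator fun t => ENNReal.ofReal ((a - t) ^ n / n !) := by
      ext t
      by_cases h0 : 0 ≤ t <;> by_cases ha : t ≤ a <;> simp [ih, h0, ha]
    calc volume (solidSimplex (n + 1) a)
        = (volume.restrict (solidSimplex (n + 1) a)).map (fun x => x 0) univ := by
          rw [Measure.map_apply (measurable_pi_apply 0) .univ, preimage_univ,
            Measure.restrict_apply_univ]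
      _ = ∫⁻ t in Icc 0 a, ENNReal.ofReal ((a - t) ^ n / n !) := by
          rw [map_eval_volume_restrict_solidSimplex_eq_withDensity_slice, hdens,
            withDensity_indicator measurableSet_Icc, withDensity_apply _ .univ,
            Measure.restrict_univ]
      _ = _ := lintegral_Icc_sub_pow_div_factorial n a

instance (m : ℕ) (a : ℝ) : IsFiniteMeasure (volume.restrict (solidSimplex m a)) :=
  isFiniteMeasure_restrict.2 (isCompact_solidSimplex m a).measure_ne_top

theorem map_eval_volume_restrict_solidSimplex (n : ℕ) (i : Fin (n + 1)) (a : ℝ) :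
    (volume.restrict (solidSimplex (n + 1) a)).map (fun x => x i) =
      (volume.restrict (Icc 0 a)).withDensity fun t => ENNReal.ofReal ((a - t) ^ n / n !) := by
  have hdens : (Ici 0).indicator (fun t => volume (solidSimplex n (a - t))) =
      (Icc 0 a).indicator fun t => ENNReal.ofReal ((a - t) ^ n / n !) := by
    ext t
    by_cases h0 : 0 ≤ t <;> by_cases ha : t ≤ a <;> simp [volume_solidSimplex, h0, ha]
  rw [map_eval_volume_restrict_solidSimplex_eq_withDensity_slice, hdens,
    withDensity_indicator measurableSet_Icc]

theorem map_sum_volume_restrict_solidSimplex (n : ℕ) (a : ℝ) :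
    (volume.restrict (solidSimplex (n + 1) a)).map (fun x => ∑ i, x i) =
      (volume.restrict (Icc 0 a)).withDensity fun t => ENNReal.ofReal (t ^ n / n !) := by
  have hsum : Measurable fun x : Fin (n + 1) → ℝ => ∑ i, x i := by fun_prop
  refine Measure.ext_of_Iic _ _ fun b => ?_
  have hS : (fun x => ∑ i, x i) ⁻¹' Iic b ∩ solidSimplex (n + 1) a =
      solidSimplex (n + 1) (min a b) := by
    ext x
    simp only [solidSimplex, mem_inter_iff, mem_preimage, mem_Iic, mem_ofPred_eq, le_min_iff]
    tauto
  have hI : Iic b ∩ Icc 0 a = Icc 0 (min a b) := by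
    ext t; simp only [mem_inter_iff, mem_Icc, mem_Iic, le_min_iff]; tauto
  rw [Measure.map_apply hsum measurableSet_Iic, Measure.restrict_apply (hsum measurableSet_Iic),
    withDensity_apply _ measurableSet_Iic, Measure.restrict_restrict measurableSet_Iic,
    hI, hS, volume_solidSimplex, lintegral_Icc_pow_div_factorial]

lemma integral_comp_of_map_eq_withDensity {X : Type*} [MeasurableSpace X] {μ : Measure X}
    {f : X → ℝ} (hf : Measurable f) {ρ : ℝ → ℝ} (hρ : Measurable ρ) {a : ℝ} (ha : 0 ≤ a)
    (hρ₀ : ∀ t ∈ Icc 0 a, 0 ≤ ρ t)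
    (hμ : μ.map f = (volume.restrict (Icc 0 a)).withDensity fun t => ENNReal.ofReal (ρ t))
    {G : ℝ → ℝ} (hG : Measurable G) :
    ∫ x, G (f x) ∂μ = ∫ t in 0..a, G t * ρ t := by
  rw [← integral_map hf.aemeasurable hG.aestronglyMeasurable, hμ,
    integral_withDensity_eq_integral_toReal_smul hρ.ennreal_ofReal
      (ae_of_all _ fun _ => ENNReal.ofReal_lt_top),
    intervalIntegral.integral_of_le ha, ← integral_Icc_eq_integral_Ioc]
  refine setIntegral_congr_fun measurableSet_Icc fun t ht => ?_
  simp [ENNReal.toReal_ofReal (hρ₀ t ht), mul_comm]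

theorem integral_solidSimplex_comp_sum (n : ℕ) {a : ℝ} (ha : 0 ≤ a) {G : ℝ → ℝ}
    (hG : Measurable G) :
    ∫ x in solidSimplex (n + 1) a, G (∑ i, x i) = ∫ t in 0..a, G t * (t ^ n / n !) :=
  integral_comp_of_map_eq_withDensity (by fun_prop) (by fun_prop) ha
    (fun t ht => by have := ht.1; positivity) (map_sum_volume_restrict_solidSimplex n a) hG

theorem integral_solidSimplex_comp_eval (n : ℕ) (i : Fin (n + 1)) {a : ℝ} (ha : 0 ≤ a)
    {G : ℝ → ℝ} (hG : Measurable G) :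
    ∫ x in solidSimplex (n + 1) a, G (x i) = ∫ t in 0..a, G t * ((a - t) ^ n / n !) :=
  integral_comp_of_map_eq_withDensity (measurable_pi_apply i) (by fun_prop) ha
    (fun t ht => by have := sub_nonneg.2 ht.2; positivity)
    (map_eval_volume_restrict_solidSimplex n i a) hG

noncomputable def mulLogPrimitive (k : ℕ) (t : ℝ) : ℝ :=
  t ^ (k + 1) / (k + 1)! * (Real.log t - (harmonic (k + 1) - 1))

lemma mulLogPrimitive_zero (t : ℝ) : mulLogPrimitive 0 t = t * Real.log t := by
  simp [mulLogPrimitive]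

@[simp] lemma mulLogPrimitive_apply_zero (k : ℕ) : mulLogPrimitive k 0 = 0 := by
  simp [mulLogPrimitive]

lemma continuous_mulLogPrimitive (k : ℕ) : Continuous (mulLogPrimitive k) := by
  have h : mulLogPrimitive k = fun t => (t ^ k * (t * Real.log t) -
      t ^ (k + 1) * (harmonic (k + 1) - 1)) / (k + 1)! := by
    ext t; simp only [mulLogPrimitive]; ring
  rw [h]
  have := Real.continuous_mul_log
  fun_prop

lemma hasDerivAt_mulLogPrimitive_succ (k : ℕ) {t : ℝ} (ht : t ≠ 0) :
    HasDerivAt (mulLogPrimitive (k + 1)) (mulLogPrimitive k t) t := by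
  refine (((hasDerivAt_pow (k + 1 + 1) t).div_const ((k + 1 + 1)! : ℝ)).mul
    ((Real.hasDerivAt_log ht).sub_const (harmonic (k + 1 + 1) - 1 : ℝ))).congr_deriv ?_
  simp only [mulLogPrimitive, harmonic_succ (k + 1), Nat.factorial_succ (k + 1)]
  push_cast
  field_simp
  ring

lemma integral_mul_sub_pow_succ_div_factorial {g G : ℝ → ℝ} {a : ℝ} (ha : 0 ≤ a)
    (hG : ContinuousOn G (Icc 0 a)) (hG₀ : G 0 = 0) (hGg : ∀ t ∈ Ioo 0 a, HasDerivAt G (g t) t)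
    (hg : IntervalIntegrable g volume 0 a) (n : ℕ) :
    ∫ t in 0..a, g t * ((a - t) ^ (n + 1) / (n + 1)!) = ∫ t in 0..a, G t * ((a - t) ^ n / n !) := by
  have hv : ∀ t, HasDerivAt (fun t => (a - t) ^ (n + 1) / (n + 1)!) (-((a - t) ^ n / n !)) t := by
    intro t
    refine ((((hasDerivAt_id t).const_sub a).pow (n + 1)).div_const ((n + 1)! : ℝ)).congr_deriv ?_
    simp only [id, Nat.factorial_succ]; push_cast; field_simp
  have hibp := intervalIntegral.integral_mul_deriv_eq_deriv_mul_of_hasDerivAt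
    (by rwa [uIcc_of_le ha]) (by fun_prop) (by simpa [ha] using hGg) (fun t _ => hv t) hg
    (Continuous.intervalIntegrable (by fun_prop) _ _)
  simp only [sub_self, zero_pow n.succ_ne_zero, zero_div, mul_zero, zero_mul, sub_zero, zero_sub,
    intervalIntegral.integral_neg, mul_neg, hG₀, neg_inj] at hibp
  exact hibp.symm

lemma integral_mulLogPrimitive_mul_sub_pow {a : ℝ} (ha : 0 ≤ a) (j n : ℕ) :
    ∫ t in 0..a, mulLogPrimitive j t * ((a - t) ^ n / n !) = mulLogPrimitive (j + n + 1) a := by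
  induction n generalizing j with
  | zero =>
    simp only [pow_zero, Nat.factorial_zero, Nat.cast_one, div_one, mul_one, add_zero]
    rw [intervalIntegral.integral_eq_sub_of_hasDerivAt_of_le ha
      (continuous_mulLogPrimitive _).continuousOn
      (fun t ht => hasDerivAt_mulLogPrimitive_succ j ht.1.ne')
      ((continuous_mulLogPrimitive j).intervalIntegrable 0 a), mulLogPrimitive_apply_zero, sub_zero]
  | succ n ih =>
    rw [integral_mul_sub_pow_succ_div_factorial ha (continuous_mulLogPrimitive _).continuousOn
      (mulLogPrimitive_apply_zero _) (fun t ht => hasDerivAt_mulLogPrimitive_succ j ht.1.ne')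
      ((continuous_mulLogPrimitive j).intervalIntegrable 0 a), ih]
    ring_nf

lemma sum_Icc_two_one_div (m : ℕ) (hm : 1 ≤ m) :
    ∑ k ∈ Finset.Icc 2 m, (1 : ℝ) / k = harmonic m - 1 := by
  rw [harmonic_eq_sum_Icc, ← Finset.insert_Icc_succ_left_eq_Icc hm, Finset.sum_insert (by simp)]
  simp

theorem integral_solidSimplex_sum_mul_log (n : ℕ) {a : ℝ} (ha : 0 ≤ a) :
    ∫ x in solidSimplex (n + 1) a, ∑ i, x i * Real.log (x i) =
      (n + 1) * mulLogPrimitive (n + 1) a := by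
  have hG : Continuous fun t : ℝ => t * Real.log t := Real.continuous_mul_log
  have hcoord (i : Fin (n + 1)) :
      ∫ x in solidSimplex (n + 1) a, x i * Real.log (x i) = mulLogPrimitive (n + 1) a := by
    rw [integral_solidSimplex_comp_eval n i ha hG.measurable]
    simpa [mulLogPrimitive_zero] using integral_mulLogPrimitive_mul_sub_pow ha 0 n
  rw [integral_finsetSum (f := fun i x => x i * Real.log (x i)) _ fun i _ =>
      (hG.comp (continuous_apply i)).continuousOn.integrableOn_compact (isCompact_solidSimplex _ a),
    Finset.sum_congr rfl fun i _ => hcoord i]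
  simp

lemma continuous_one_sub_mul_log_one_sub : Continuous fun t : ℝ => (1 - t) * Real.log (1 - t) :=
  Real.continuous_mul_log.comp (continuous_const.sub continuous_id)

theorem integral_solidSimplex_eq_intervalIntegral_sub_mulLogPrimitive (n : ℕ) (r : ℝ) {a : ℝ}
    (ha : 0 ≤ a) :
    ∫ x in solidSimplex (n + 1) a, (2 * (∑ i, x i) * Real.log r -
        ((∑ i, x i * Real.log (x i)) + (1 - ∑ i, x i) * Real.log (1 - ∑ i, x i))) =
      (∫ t in 0..a, (2 * t * Real.log r - (1 - t) * Real.log (1 - t)) * (t ^ n / n !)) -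
        (n + 1) * mulLogPrimitive (n + 1) a := by
  have hf : Continuous fun t : ℝ => 2 * t * Real.log r - (1 - t) * Real.log (1 - t) :=
    (by fun_prop : Continuous fun t : ℝ => 2 * t * Real.log r).sub
      continuous_one_sub_mul_log_one_sub
  have hK := isCompact_solidSimplex (n + 1) a
  have hsum : Continuous fun x : Fin (n + 1) → ℝ => ∑ i, x i := by fun_prop
  rw [← integral_solidSimplex_comp_sum n ha hf.measurable,
    ← integral_solidSimplex_sum_mul_log n ha, ← integral_sub]
  · congr 1; ext x; ring
  · exact (hf.comp hsum).continuousOn.integrableOn_compact hK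
  · exact (continuous_finsetSum _ fun i _ =>
      Real.continuous_mul_log.comp (continuous_apply i)).continuousOn.integrableOn_compact hK

theorem stmt_19_general (m : ℕ) (hm : 1 ≤ m) (r : ℝ)
    (α : ℝ) (hα : α ∈ Set.Ioo (0 : ℝ) 1) :
    HasDerivAt
      (fun a : ℝ =>
        ∫ x in {x : Fin m → ℝ | (∀ i, 0 ≤ x i) ∧ ∑ i, x i ≤ a},
          (2 * (∑ i, x i) * Real.log r -
            ((∑ i, x i * Real.log (x i)) + (1 - ∑ i, x i) * Real.log (1 - ∑ i, x i))))
      ((α ^ (m - 1) / (Nat.factorial (m - 1) : ℝ)) *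
        ((2 * Real.log r + ∑ k ∈ Finset.Icc 2 m, (1 : ℝ) / k) * α -
          (α * Real.log α + (1 - α) * Real.log (1 - α)))) α := by
  obtain ⟨n, rfl⟩ : ∃ n, m = n + 1 := ⟨m - 1, by omega⟩
  have hf : Continuous fun t : ℝ =>
      (2 * t * Real.log r - (1 - t) * Real.log (1 - t)) * (t ^ n / n !) :=
    ((by fun_prop : Continuous fun t : ℝ => 2 * t * Real.log r).sub
      continuous_one_sub_mul_log_one_sub).mul (by fun_prop)
  have hderiv := (intervalIntegral.integral_hasDerivAt_right (hf.intervalIntegrable 0 α)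
    (hf.stronglyMeasurableAtFilter _ _) hf.continuousAt).sub
    ((hasDerivAt_mulLogPrimitive_succ n hα.1.ne').const_mul ((n : ℝ) + 1))
  refine (hderiv.congr_of_eventuallyEq ?_).congr_deriv ?_
  · filter_upwards [Ioi_mem_nhds hα.1] with a ha
    exact integral_solidSimplex_eq_intervalIntegral_sub_mulLogPrimitive n r ha.le
  · rw [Nat.add_sub_cancel, sum_Icc_two_one_div (n + 1) hm, mulLogPrimitive, Nat.factorial_succ]
    push_cast
    field_simp
    ring

theorem stmt_19 (m : ℕ) (hm : 1 ≤ m) (r : ℝ) (hr : 0 < r)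
    (α : ℝ) (hα : α ∈ Set.Ioo (0 : ℝ) 1) :
    HasDerivAt
      (fun a : ℝ =>
        ∫ x in {x : Fin m → ℝ | (∀ i, 0 ≤ x i) ∧ ∑ i, x i ≤ a},
          (2 * (∑ i, x i) * Real.log r -
            ((∑ i, x i * Real.log (x i)) + (1 - ∑ i, x i) * Real.log (1 - ∑ i, x i))))
      ((α ^ (m - 1) / (Nat.factorial (m - 1) : ℝ)) *
        ((2 * Real.log r + ∑ k ∈ Finset.Icc 2 m, (1 : ℝ) / k) * α -
          (α * Real.log α + (1 - α) * Real.log (1 - α)))) α :=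
  stmt_19_general m hm r α hα
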